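/- Let λ, a, b ∈ ℂ with λ ≠ 0, 1, and let W be a nontrivial simple 𝔚-module in O_𝔚. Let M be any Virasoro submodule of L(W, λ, a, b). If the subspace M̂ = {v ∈ W : v ⊗ ℂ[t, t⁻¹] ⊆ M} is nonzero, then M = L(W, λ, a, b). -/

import Mathlib

/-!
Applying `d_k` to `w ⊗ t^{j-k}` with `w ∈ M̂` and removing the scalar part shows that
`λ^k e^{kt} d/dt w - d_{-1} w ∈ M̂` for all `k`. Since `W ∈ O_𝔚`, `e^{kt} d/dt w = p(k)` for a
polynomial `p` with coefficients `d_{i-1} w / i!`. For `λ ≠ 0, 1` an expression `λ^k p(k) + c` can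
vanish modulo `M̂` for all `k` only if all coefficients lie in `M̂`, so `M̂` is a `𝔚`-submodule.
By simplicity `M̂ = W`, i.e. `M` contains every `w ⊗ t^j`.
-/

/-- A representation of the Witt algebra `𝔚 = span{d_i : i ≥ -1}`, encoded by the family of
operators `d i` (only the indices `i ≥ -1` are relevant) satisfying
`[d_m, d_n] = (n - m) d_{m+n}`. -/
structure WittRep (W : Type*) [AddCommGroup W] [Module ℂ W] where
  d : ℤ → W →ₗ[ℂ] W
  comm : ∀ m n : ℤ, -1 ≤ m → -1 ≤ n →
    d m ∘ₗ d n - d n ∘ₗ d m = (((n - m : ℤ) : ℂ)) • d (m + n)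

namespace WittRep

variable {W : Type*} [AddCommGroup W] [Module ℂ W]

/-- Condition A : the module lies in the category `O_𝔚`. -/
def InO (ρ : WittRep W) : Prop :=
  ∀ v : W, ∃ n : ℕ, ∀ i : ℤ, (n : ℤ) ≤ i → ρ.d i v = 0

/-- The module is trivial: the Lie algebra acts by zero. -/
def IsTrivial (ρ : WittRep W) : Prop := ∀ i : ℤ, -1 ≤ i → ρ.d i = 0

/-- A `𝔚`-submodule. -/
def Invariant (ρ : WittRep W) (U : Submodule ℂ W) : Prop :=
  ∀ i : ℤ, -1 ≤ i → ∀ u ∈ U, ρ.d i u ∈ U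

/-- Simplicity of a `𝔚`-module. -/
def IsSimple (ρ : WittRep W) : Prop :=
  (∃ v : W, v ≠ 0) ∧ ∀ U : Submodule ℂ W, ρ.Invariant U → U = ⊥ ∨ U = ⊤

/-- A `𝔟`-submodule (`𝔟 = span{d_i : i ≥ 0}`). -/
def BInvariant (ρ : WittRep W) (U : Submodule ℂ W) : Prop :=
  ∀ i : ℤ, 0 ≤ i → ∀ u ∈ U, ρ.d i u ∈ U

/-- The socle `Soc_𝔟(W)`: the sum of the minimal nonzero `𝔟`-submodules. -/
def Soc (ρ : WittRep W) : Submodule ℂ W :=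
  sSup {U | ρ.BInvariant U ∧ U ≠ ⊥ ∧
    ∀ U' : Submodule ℂ W, ρ.BInvariant U' → U' ≠ ⊥ → U' ≤ U → U' = U}

/-- `w₀` is a highest weight vector of weight `b'`. -/
def IsHW (ρ : WittRep W) (w₀ : W) (b' : ℂ) : Prop :=
  w₀ ≠ 0 ∧ ρ.d 0 w₀ = b' • w₀ ∧ ∀ i : ℤ, 1 ≤ i → ρ.d i w₀ = 0

/-- `w₀` generates the `𝔚`-module. -/
def Generates (ρ : WittRep W) (w₀ : W) : Prop :=
  ∀ U : Submodule ℂ W, ρ.Invariant U → w₀ ∈ U → U = ⊤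

/-- The operator `e^{kt} d/dt = Σ_{i ≥ 0} (k^i/i!) d_{i-1}` (a finite sum on each vector of a
module in `O_𝔚`). -/
noncomputable def E (ρ : WittRep W) (k : ℤ) (w : W) : W :=
  ∑ᶠ i : ℕ, (((k : ℂ) ^ i) / (Nat.factorial i : ℂ)) • ρ.d ((i : ℤ) - 1) w

/-- The action of `d_k` on `L(W, λ, a, b) = W ⊗ ℂ[t, t⁻¹]`, realized on `ℤ →₀ W`
(`w ⊗ t^j ↦ Finsupp.single j w`):
`d_k · (w ⊗ t^j) = ((λ^k e^{kt} − 1) d/dt + a + kb + j) w ⊗ t^{k+j}`. -/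
noncomputable def Lact (ρ : WittRep W) (lam a b : ℂ) (k : ℤ) (f : ℤ →₀ W) : ℤ →₀ W :=
  f.sum fun j w => Finsupp.single (k + j)
    (lam ^ k • ρ.E k w - ρ.d (-1) w + (a + (k : ℂ) * b + (j : ℂ)) • w)

/-- The PBW map `ℕ →₀ ℂ → W`, `(k, c) ↦ c • d_{-1}^k w₀`. -/
noncomputable def pbwMap (ρ : WittRep W) (w₀ : W) : (ℕ →₀ ℂ) →ₗ[ℂ] W :=
  Finsupp.lsum ℂ fun k : ℕ => ((ρ.d (-1)) ^ k) ∘ₗ LinearMap.toSpanSingleton ℂ W w₀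

/-- `W` is the Verma `𝔚`-module with highest weight vector `w₀` of highest weight `b'`. -/
def IsVerma (ρ : WittRep W) (w₀ : W) (b' : ℂ) : Prop :=
  ρ.d 0 w₀ = b' • w₀ ∧ (∀ i : ℤ, 1 ≤ i → ρ.d i w₀ = 0) ∧
    Function.Bijective (ρ.pbwMap w₀)

/-- `W^{(n)} = Σ_{i=0}^n d_{-1}^i (Soc_𝔟 W)`. -/
noncomputable def Wn (ρ : WittRep W) (n : ℕ) : Submodule ℂ W :=
  ⨆ i : Fin (n + 1), Submodule.map ((ρ.d (-1)) ^ (i : ℕ)) ρ.Soc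

/-- `L₀(a, b') = span{d₁^i · (w₀ ⊗ t^{2j})} ⊆ L(W, -1, a, b' + 1)`. -/
noncomputable def Lzero (ρ : WittRep W) (a b' : ℂ) (w₀ : W) : Submodule ℂ (ℤ →₀ W) :=
  Submodule.span ℂ
    {g | ∃ (i : ℕ) (j : ℤ), g = (ρ.Lact (-1) a (b' + 1) 1)^[i] (Finsupp.single (2 * j) w₀)}

/-- `L₁(a, b') = span{d₁^i · (w₀ ⊗ t^{2j+1})} ⊆ L(W, -1, a, b' + 1)`. -/
noncomputable def Lone (ρ : WittRep W) (a b' : ℂ) (w₀ : W) : Submodule ℂ (ℤ →₀ W) :=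
  Submodule.span ℂ
    {g | ∃ (i : ℕ) (j : ℤ), g = (ρ.Lact (-1) a (b' + 1) 1)^[i] (Finsupp.single (2 * j + 1) w₀)}

end WittRep

/-- A representation of the Lie algebra `𝔟 = span{d_i : i ≥ 0}`. -/
structure BRep (B : Type*) [AddCommGroup B] [Module ℂ B] where
  d : ℕ → B →ₗ[ℂ] B
  comm : ∀ m n : ℕ, d m ∘ₗ d n - d n ∘ₗ d m = (((n : ℂ) - (m : ℂ))) • d (m + n)

namespace BRep

variable {B : Type*} [AddCommGroup B] [Module ℂ B]

/-- Condition A : the module lies in the category `O_𝔟`. -/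
def InO (ρ : BRep B) : Prop := ∀ v : B, ∃ n : ℕ, ∀ i : ℕ, n ≤ i → ρ.d i v = 0

def IsTrivial (ρ : BRep B) : Prop := ∀ i : ℕ, ρ.d i = 0

def IsSimple (ρ : BRep B) : Prop :=
  (∃ v : B, v ≠ 0) ∧
    ∀ U : Submodule ℂ B, (∀ i : ℕ, ∀ u ∈ U, ρ.d i u ∈ U) → U = ⊥ ∨ U = ⊤

/-- The set of `r ∈ ℤ≥0` such that `d_{r+i} v = 0` for all `i ≥ 1`;
`ord_𝔟(v)` is its least element. -/
def ordSet (ρ : BRep B) (v : B) : Set ℕ := {r : ℕ | ∀ i : ℕ, r + 1 ≤ i → ρ.d i v = 0}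

/-- The action of `d_m` on the Virasoro module `N(B_(c), a) = B ⊗ ℂ[t, t⁻¹]`, realized on
`ℤ →₀ B`:  `d_m · (w ⊗ t^j) = (Σ_{i≥1} (m^i/i!) d_{i-1} + mc + a + j) w ⊗ t^{m+j}`
(`c` is the twist of the `d₀`-action; `c = 0` gives `N(B, a)`). -/
noncomputable def Nact (ρ : BRep B) (a c : ℂ) (m : ℤ) (f : ℤ →₀ B) : ℤ →₀ B :=
  f.sum fun j w => Finsupp.single (m + j)
    ((∑ᶠ i : ℕ, (((m : ℂ) ^ (i + 1)) / (Nat.factorial (i + 1) : ℂ)) • ρ.d i w) +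
      ((m : ℂ) * c + a + (j : ℂ)) • w)

end BRep

/-- For a family `U : ℤ → Submodule ℂ W`, the subspace `⊕_j U j ⊗ t^j` of `W ⊗ ℂ[t,t⁻¹]`. -/
def gradedSub {W : Type*} [AddCommGroup W] [Module ℂ W] (U : ℤ → Submodule ℂ W) :
    Submodule ℂ (ℤ →₀ W) where
  carrier := {f | ∀ j, f j ∈ U j}
  add_mem' := fun hf hg j => by
    simpa only [Finsupp.add_apply] using (U j).add_mem (hf j) (hg j)
  zero_mem' := fun j => by simp
  smul_mem' := fun c f hf j => by
    simpa only [Finsupp.smul_apply] using (U j).smul_mem c (hf j)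

/-- A submodule invariant under a (ℤ-indexed) family of operators. -/
def ActInvariant {V : Type*} [AddCommGroup V] [Module ℂ V] (act : ℤ → V → V)
    (M : Submodule ℂ V) : Prop :=
  ∀ k : ℤ, ∀ u ∈ M, act k u ∈ M

/-- Simplicity of the module given by a family of operators (the central element acts by zero). -/
def ActSimple {V : Type*} [AddCommGroup V] [Module ℂ V] (act : ℤ → V → V) : Prop :=
  (∃ v : V, v ≠ 0) ∧ ∀ M : Submodule ℂ V, ActInvariant act M → M = ⊥ ∨ M = ⊤

/-- A representation of the Virasoro algebra. -/
structure VirasoroRep (V : Type*) [AddCommGroup V] [Module ℂ V] where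
  d : ℤ → V →ₗ[ℂ] V
  z : V →ₗ[ℂ] V
  comm : ∀ m n : ℤ, d m ∘ₗ d n - d n ∘ₗ d m =
    (((n - m : ℤ) : ℂ)) • d (m + n) +
      (if m + n = 0 then (((n : ℂ) ^ 3 - (n : ℂ)) / 12) else 0) • z
  comm_z : ∀ m : ℤ, d m ∘ₗ z = z ∘ₗ d m


open Finset Polynomial
open scoped Nat

lemma Polynomial.eq_zero_of_forall_pow_mul_eval_add_eq_zero {K : Type*} [Field K] [CharZero K]
    {μ c : K} {p : K[X]} (hμ0 : μ ≠ 0) (hμ1 : μ ≠ 1)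
    (h : ∀ k : ℕ, μ ^ k * p.eval (k : K) + c = 0) : p = 0 ∧ c = 0 := by
  -- `k ↦ μ^k p(k)` is constant, so `μ p(k+1) = p(k)`; then compare leading coefficients
  have hstep : ∀ k : ℕ, μ * p.eval ((k : K) + 1) - p.eval (k : K) = 0 := by
    intro k
    have hdiff : μ ^ k * (μ * p.eval ((k : K) + 1) - p.eval (k : K)) = 0 := by
      have hsucc := h (k + 1)
      push_cast at hsucc
      linear_combination hsucc - h k
    exact (mul_eq_zero.mp hdiff).resolve_left (pow_ne_zero k hμ0)
  have hq : C μ * taylor 1 p - p = 0 := by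
    refine eq_zero_of_infinite_isRoot _
      ((Set.infinite_range_of_injective Nat.cast_injective).mono ?_)
    rintro _ ⟨k, rfl⟩
    simpa [taylor_eval] using hstep k
  have hlead : (μ - 1) * p.leadingCoeff = 0 := by
    simpa [coeff_taylor_natDegree, sub_mul] using congr_arg (coeff · p.natDegree) hq
  have hp : p = 0 :=
    leadingCoeff_eq_zero.mp ((mul_eq_zero.mp hlead).resolve_left (sub_ne_zero.mpr hμ1))
  refine ⟨hp, ?_⟩
  simpa [hp] using h 0

lemma Submodule.mem_of_forall_pow_smul_sum_add_mem {K V : Type*} [Field K] [CharZero K]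
    [AddCommGroup V] [Module K V] (U : Submodule K V) {μ : K} (hμ0 : μ ≠ 0) (hμ1 : μ ≠ 1)
    {N : ℕ} {c : ℕ → V} {c₀ : V}
    (h : ∀ k : ℕ, μ ^ k • ∑ i ∈ range N, (k : K) ^ i • c i + c₀ ∈ U) :
    (∀ i < N, c i ∈ U) ∧ c₀ ∈ U := by
  have hdual : ∀ ℓ ∈ U.dualAnnihilator, (∀ i < N, ℓ (c i) = 0) ∧ ℓ c₀ = 0 := by
    intro ℓ hℓ
    rw [Submodule.mem_dualAnnihilator] at hℓ
    set p : K[X] := ∑ i ∈ range N, C (ℓ (c i)) * X ^ i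
    have hp : ∀ k : ℕ, μ ^ k * p.eval (k : K) + ℓ c₀ = 0 := by
      intro k
      have hk := hℓ _ (h k)
      simp only [map_add, map_smul, map_sum, smul_eq_mul] at hk
      convert hk using 3
      simp only [p, eval_finsetSum, eval_mul, eval_C, eval_pow, eval_X]
      exact sum_congr rfl fun i _ => mul_comm _ _
    obtain ⟨hp0, hc₀⟩ := eq_zero_of_forall_pow_mul_eval_add_eq_zero hμ0 hμ1 hp
    refine ⟨fun i hi => ?_, hc₀⟩
    simpa [p, finsetSum_coeff, coeff_C_mul_X_pow, hi] using congr_arg (coeff · i) hp0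
  have hmem := fun v => (Subspace.forall_mem_dualAnnihilator_apply_eq_zero_iff U v).mp
  exact ⟨fun i hi => hmem _ fun ℓ hℓ => (hdual ℓ hℓ).1 i hi, hmem _ fun ℓ hℓ => (hdual ℓ hℓ).2⟩

section hatSubmodule

variable {R W : Type*} [Semiring R] [AddCommMonoid W] [Module R W]

noncomputable def hatSubmodule (M : Submodule R (ℤ →₀ W)) : Submodule R W :=
  ⨅ j, M.comap (Finsupp.lsingle j)

variable {M : Submodule R (ℤ →₀ W)}

lemma mem_hatSubmodule {v : W} : v ∈ hatSubmodule M ↔ ∀ j, Finsupp.single j v ∈ M := by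
  simp [hatSubmodule]

lemma eq_top_of_hatSubmodule_eq_top (h : hatSubmodule M = ⊤) : M = ⊤ := by
  rw [eq_top_iff, ← Finsupp.iSup_lsingle_range]
  refine iSup_le fun j => ?_
  rintro _ ⟨v, rfl⟩
  exact mem_hatSubmodule.mp (h ▸ Submodule.mem_top) j

end hatSubmodule

namespace WittRep

variable {W : Type*} [AddCommGroup W] [Module ℂ W] (ρ : WittRep W)

lemma E_eq_sum {v : W} {N : ℕ} (hN : ∀ i : ℤ, (N : ℤ) ≤ i → ρ.d i v = 0) (k : ℤ) :
    ρ.E k v = ∑ i ∈ range (N + 1), ((k : ℂ) ^ i / (i ! : ℂ)) • ρ.d ((i : ℤ) - 1) v := by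
  refine finsum_eq_sum_of_support_subset _ fun i hi => ?_
  by_contra hiN
  simp only [coe_range, Set.mem_Iio, not_lt] at hiN
  exact hi (by beta_reduce; rw [hN _ (by omega), smul_zero])

lemma Lact_single (lam a b : ℂ) (k j : ℤ) (v : W) :
    ρ.Lact lam a b k (Finsupp.single j v) =
      Finsupp.single (k + j)
        (lam ^ k • ρ.E k v - ρ.d (-1) v + (a + (k : ℂ) * b + (j : ℂ)) • v) := by
  rw [Lact, Finsupp.sum_single_index]
  simp [E]

variable {lam a b : ℂ} {M : Submodule ℂ (ℤ →₀ W)}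

lemma zpow_smul_E_sub_mem_hatSubmodule (hM : ActInvariant (ρ.Lact lam a b) M) {v : W}
    (hv : v ∈ hatSubmodule M) (k : ℤ) :
    lam ^ k • ρ.E k v - ρ.d (-1) v ∈ hatSubmodule M := by
  rw [mem_hatSubmodule] at hv ⊢
  intro j
  have hact := hM k _ (hv (j - k))
  rw [Lact_single, add_sub_cancel] at hact
  have hscalar := M.smul_mem (a + k * b + ((j - k : ℤ) : ℂ)) (hv j)
  rw [Finsupp.smul_single] at hscalar
  simpa [← Finsupp.single_sub] using M.sub_mem hact hscalar

lemma invariant_hatSubmodule (hO : ρ.InO) (hlam0 : lam ≠ 0) (hlam1 : lam ≠ 1)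
    (hM : ActInvariant (ρ.Lact lam a b) M) : ρ.Invariant (hatSubmodule M) := by
  intro i hi v hv
  obtain ⟨N, hN⟩ := hO v
  obtain ⟨hcoeff, -⟩ := (hatSubmodule M).mem_of_forall_pow_smul_sum_add_mem hlam0 hlam1
    (N := N + 1) (c := fun n => (n ! : ℂ)⁻¹ • ρ.d ((n : ℤ) - 1) v) (c₀ := -ρ.d (-1) v)
    fun k => by
      have hk := ρ.zpow_smul_E_sub_mem_hatSubmodule hM hv k
      simpa only [zpow_natCast, ρ.E_eq_sum hN, Int.cast_natCast, div_eq_mul_inv, mul_smul,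
        sub_eq_add_neg] using hk
  obtain ⟨n, rfl⟩ : ∃ n : ℕ, i = n - 1 := ⟨(i + 1).toNat, by omega⟩
  by_cases hn : n < N + 1
  · simpa [smul_smul, Nat.factorial_ne_zero] using
      (hatSubmodule M).smul_mem (n ! : ℂ) (hcoeff n hn)
  · rw [hN _ (by omega)]
    exact zero_mem _

end WittRep

theorem stmt10_general {W : Type*} [AddCommGroup W] [Module ℂ W] (ρ : WittRep W)
    (hO : ρ.InO) (hs : ρ.IsSimple)
    (lam a b : ℂ) (hlam0 : lam ≠ 0) (hlam1 : lam ≠ 1)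
    (M : Submodule ℂ (ℤ →₀ W)) (hM : ActInvariant (ρ.Lact lam a b) M)
    (hhat : ∃ v : W, v ≠ 0 ∧ ∀ j : ℤ, Finsupp.single j v ∈ M) :
    M = ⊤ := by
  obtain ⟨v, hv0, hv⟩ := hhat
  have hinv := ρ.invariant_hatSubmodule hO hlam0 hlam1 hM
  have hne : hatSubmodule M ≠ ⊥ := fun hbot =>
    hv0 (by simpa [hbot] using mem_hatSubmodule.mpr hv)
  exact eq_top_of_hatSubmodule_eq_top ((hs.2 _ hinv).resolve_left hne)

theorem stmt10 {W : Type*} [AddCommGroup W] [Module ℂ W] (ρ : WittRep W)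
    (hO : ρ.InO) (hnt : ¬ ρ.IsTrivial) (hs : ρ.IsSimple)
    (lam a b : ℂ) (hlam0 : lam ≠ 0) (hlam1 : lam ≠ 1)
    (M : Submodule ℂ (ℤ →₀ W)) (hM : ActInvariant (ρ.Lact lam a b) M)
    (hhat : ∃ v : W, v ≠ 0 ∧ ∀ j : ℤ, Finsupp.single j v ∈ M) :
    M = ⊤ :=
  stmt10_general ρ hO hs lam a b hlam0 hlam1 M hM hhat
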